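/- arXiv:math/0312024 — 2 statements merged into one kernel-verified Lean document; each statement's English description precedes it below -/
import Mathlib

section
/- Let V be an (A, Der A)-module and α ∈ ℂ^d. Assume V is the direct sum of its weight spaces V_m, m ∈ ℤ^d, and that V has no proper nonzero ℂ-subspace invariant under all μ(a), a ∈ A, and all ρ(D), D ∈ Der A. Then for each r ∈ ℤ^d, the weight space V_r has no proper nonzero ℂ-subspace invariant under all operators T(u,s), u ∈ ℂ^d, s ∈ ℤ^d; i.e., each weight space is irreducible under the operators T(u,s). -/
attribute [local instance 100] LieRing.ofAssociativeRing

/-- `A = ℂ[t₁^{±1},…,t_d^{±1}]`, the group algebra of `ℤ^d` over `ℂ`. -/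
abbrev Ad (d : ℕ) := AddMonoidAlgebra ℂ (Fin d → ℤ)

/-- The monomial `t^r`. -/
noncomputable def tm {d : ℕ} (r : Fin d → ℤ) : Ad d := AddMonoidAlgebra.single r 1

/-- `IsD u r D` says that the derivation `D` of `A` is `D(u,r) = ∑ᵢ uᵢ t^r tᵢ ∂/∂tᵢ`. -/
def IsD {d : ℕ} (u : Fin d → ℂ) (r : Fin d → ℤ)
    (D : Derivation ℂ (Ad d) (Ad d)) : Prop :=
  ∀ s : Fin d → ℤ, D (tm s) = (∑ i, u i * (s i : ℂ)) • tm (r + s)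

lemma tm_mul {d : ℕ} (a b : Fin d → ℤ) : tm a * tm b = tm (a + b) := by
  simp [tm, AddMonoidAlgebra.single_mul_single]

lemma single_eq_smul_tm {d : ℕ} (m : Fin d → ℤ) (c : ℂ) :
    (AddMonoidAlgebra.single m c : Ad d) = c • tm m := by
  rw [tm, AddMonoidAlgebra.smul_single', mul_one]

lemma single_mul {d : ℕ} (m : Fin d → ℤ) (c : ℂ) (x : Ad d) :
    (AddMonoidAlgebra.single m c : Ad d) * x = c • (tm m * x) := by
  rw [single_eq_smul_tm, smul_mul_assoc]

noncomputable def DdL {d : ℕ} (u : Fin d → ℂ) (r : Fin d → ℤ) : Ad d →ₗ[ℂ] Ad d :=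
  Finsupp.lsum ℂ (fun m => LinearMap.toSpanSingleton ℂ (Ad d)
    ((∑ i, u i * (m i : ℂ)) • tm (r + m))) ∘ₗ
    (AddMonoidAlgebra.coeffLinearEquiv ℂ).toLinearMap

lemma DdL_single {d : ℕ} (u : Fin d → ℂ) (r : Fin d → ℤ) (m : Fin d → ℤ) (c : ℂ) :
    DdL u r (AddMonoidAlgebra.single m c) = c • ((∑ i, u i * (m i : ℂ)) • tm (r + m)) := by
  show Finsupp.lsum ℂ _ (Finsupp.single m c) = _
  erw [Finsupp.lsum_single, LinearMap.toSpanSingleton_apply]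

noncomputable def Dd {d : ℕ} (u : Fin d → ℂ) (r : Fin d → ℤ) :
    Derivation ℂ (Ad d) (Ad d) where
  toLinearMap := DdL u r
  map_one_eq_zero' := by
    show DdL u r (AddMonoidAlgebra.single 0 1) = 0
    rw [DdL_single]; simp
  leibniz' a b := by
    induction a using AddMonoidAlgebra.induction_linear with
    | zero => simp
    | add f g hf hg =>
      rw [add_mul, map_add, hf, hg, map_add]
      module
    | single m c =>
      induction b using AddMonoidAlgebra.induction_linear with
      | zero => simp
      | add f g hf hg =>
        rw [mul_add, map_add, hf, hg, map_add]
        module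
      | single n e =>
        have hmul : (AddMonoidAlgebra.single m c * AddMonoidAlgebra.single n e : Ad d)
            = (AddMonoidAlgebra.single (m + n) (c * e) : Ad d) :=
          AddMonoidAlgebra.single_mul_single _ _ _ _
        rw [hmul, DdL_single, DdL_single, DdL_single]
        simp only [smul_eq_mul]
        rw [single_mul, single_mul]
        simp only [mul_smul_comm, smul_smul, tm_mul]
        have h1 : m + (r + n) = r + (m + n) := by abel
        have h2 : n + (r + m) = r + (m + n) := by abel
        rw [h1, h2, ← add_smul]
        congr 1
        simp only [Pi.add_apply, Int.cast_add, mul_add, Finset.sum_add_distrib]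
        ring


lemma isD_Dd {d : ℕ} (u : Fin d → ℂ) (r : Fin d → ℤ) : IsD u r (Dd u r) := by
  intro s
  show DdL u r (tm s) = _
  rw [tm]
  rw [DdL_single, one_smul]

lemma single_eq_smul_tm' {d : ℕ} (m : Fin d → ℤ) (c : ℂ) :
    (AddMonoidAlgebra.single m c : Ad d) = c • tm m := single_eq_smul_tm m c

lemma tm_zero {d : ℕ} : tm (0 : Fin d → ℤ) = 1 := rfl

lemma tm_neg_mul {d : ℕ} (a : Fin d → ℤ) : tm (-a) * tm a = 1 := by
  rw [tm_mul, neg_add_cancel, tm_zero]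

lemma D_tm_neg {d : ℕ} (D : Derivation ℂ (Ad d) (Ad d)) (a : Fin d → ℤ) :
    D (tm (-a)) = -(tm (-a) * (tm (-a) * D (tm a))) := by
  have h1 : tm a * tm (-a) = 1 := by rw [tm_mul, add_neg_cancel, tm_zero]
  have h := D.leibniz (tm a) (tm (-a))
  rw [h1, D.map_one_eq_zero] at h
  have h2 := congrArg (fun x => tm (-a) * x) h.symm
  simp only [smul_eq_mul, mul_add, mul_zero] at h2
  rw [← mul_assoc, tm_neg_mul, one_mul] at h2
  exact eq_neg_of_add_eq_zero_left h2

lemma derivation_ext {d : ℕ} (D1 D2 : Derivation ℂ (Ad d) (Ad d))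
    (h : ∀ i, D1 (tm (Pi.single i 1)) = D2 (tm (Pi.single i 1))) : D1 = D2 := by
  have hG : ∀ m : Fin d → ℤ, D1 (tm m) = D2 (tm m) := by
    let G : AddSubgroup (Fin d → ℤ) :=
      { carrier := {m | D1 (tm m) = D2 (tm m)}
        zero_mem' := by simp [tm_zero]
        add_mem' := by
          intro a b ha hb
          simp only [Set.mem_setOf_eq] at ha hb ⊢
          rw [← tm_mul, Derivation.leibniz, Derivation.leibniz, ha, hb]
        neg_mem' := by
          intro a ha
          simp only [Set.mem_setOf_eq] at ha ⊢
          rw [D_tm_neg D1, D_tm_neg D2, ha] }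
    intro m
    have hm : m ∈ G := by
      have : m = ∑ i, Pi.single i (m i) := (Finset.univ_sum_single m).symm
      rw [this]
      apply sum_mem
      intro i _
      have : Pi.single i (m i) = (m i) • (Pi.single i (1 : ℤ) : Fin d → ℤ) := by
        ext j
        by_cases hji : j = i <;> simp [Pi.single_apply, hji]
      rw [this]
      exact zsmul_mem (h i) (m i)
    exact hm
  apply Derivation.ext
  intro a
  induction a using AddMonoidAlgebra.induction_linear with
  | zero => simp
  | add f g hf hg => rw [map_add, map_add, hf, hg]
  | single m c => rw [single_eq_smul_tm', Derivation.map_smul, Derivation.map_smul, hG]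

lemma derivation_sum_apply {d : ℕ} {ι : Type*} (s : Finset ι)
    (f : ι → Derivation ℂ (Ad d) (Ad d)) (a : Ad d) :
    (∑ i ∈ s, f i) a = ∑ i ∈ s, f i a := by
  induction s using Finset.cons_induction with
  | empty => simp
  | cons i s hi ih => rw [Finset.sum_cons, Derivation.add_apply, ih, Finset.sum_cons]

noncomputable def coeffs {d : ℕ} (D : Derivation ℂ (Ad d) (Ad d)) (i : Fin d) : Ad d :=
  D (tm (Pi.single i 1)) * tm (-(Pi.single i 1))

lemma mul_tm_eq_sum {d : ℕ} (a : Ad d) (n : Fin d → ℤ) :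
    a * tm n = ∑ s ∈ a.coeff.support, a.coeff s • tm (s + n) := by
  conv_lhs => rw [← AddMonoidAlgebra.sum_coeff_single a]
  rw [Finsupp.sum, Finset.sum_mul]
  refine Finset.sum_congr rfl fun s _ => ?_
  rw [single_mul, tm_mul]

lemma D_eq_sum {d : ℕ} (D : Derivation ℂ (Ad d) (Ad d)) :
    D = ∑ i, ∑ s ∈ (coeffs D i).coeff.support,
      (coeffs D i).coeff s • Dd (Pi.single i (1 : ℂ)) s := by
  apply derivation_ext
  intro j
  rw [derivation_sum_apply]
  have hsum : ∀ i : Fin d,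
      (∑ s ∈ (coeffs D i).coeff.support, (coeffs D i).coeff s • Dd (Pi.single i (1 : ℂ)) s)
        (tm (Pi.single j 1))
      = ∑ s ∈ (coeffs D i).coeff.support,
          (coeffs D i).coeff s • (((Pi.single j (1:ℤ) : Fin d → ℤ) i : ℂ) • tm (s + Pi.single j 1)) := by
    intro i
    rw [derivation_sum_apply]
    refine Finset.sum_congr rfl fun s _ => ?_
    rw [Derivation.smul_apply, isD_Dd (Pi.single i (1 : ℂ)) s (Pi.single j 1)]
    congr 2
    simp [Pi.single_apply, eq_comm]
  simp only [hsum]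
  rw [Finset.sum_eq_single j]
  · have hco : coeffs D j * tm (Pi.single j 1) = D (tm (Pi.single j 1)) := by
      rw [coeffs, mul_assoc, tm_neg_mul, mul_one]
    rw [← hco, mul_tm_eq_sum]
    refine (Finset.sum_congr rfl fun s _ => ?_).symm
    simp
  · intro i _ hij
    refine Finset.sum_eq_zero fun s _ => ?_
    have : ((Pi.single j (1:ℤ) : Fin d → ℤ) i : ℂ) = 0 := by
      simp [Pi.single_apply, hij.symm]
    rw [this, zero_smul, smul_zero]
  · intro hj
    simp at hj


/-- The weight space `V_m = {v ∈ V : ρ(D(u,0)) v = (u, m+α) v for all u ∈ ℂ^d}`. -/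
noncomputable def wtSp {d : ℕ} {V : Type*} [AddCommGroup V] [Module ℂ V]
    (ρ : Derivation ℂ (Ad d) (Ad d) →ₗ⁅ℂ⁆ Module.End ℂ V)
    (α : Fin d → ℂ) (m : Fin d → ℤ) : Submodule ℂ V :=
  ⨅ (u : Fin d → ℂ) (D : Derivation ℂ (Ad d) (Ad d)) (_ : IsD u 0 D),
    LinearMap.ker (ρ D - (∑ i, u i * ((m i : ℂ) + α i)) • (1 : Module.End ℂ V))

lemma mem_wtSp {d : ℕ} {V : Type*} [AddCommGroup V] [Module ℂ V]
    {ρ : Derivation ℂ (Ad d) (Ad d) →ₗ⁅ℂ⁆ Module.End ℂ V}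
    {α : Fin d → ℂ} {m : Fin d → ℤ} {v : V} :
    v ∈ wtSp ρ α m ↔ ∀ (u : Fin d → ℂ) (D : Derivation ℂ (Ad d) (Ad d)), IsD u 0 D →
      ρ D v = (∑ i, u i * ((m i : ℂ) + α i)) • v := by
  simp only [wtSp, Submodule.mem_iInf, LinearMap.mem_ker, LinearMap.sub_apply,
    LinearMap.smul_apply, Module.End.one_apply, sub_eq_zero]


/-- Let `(V, μ, ρ)` be an irreducible `(A, Der A)`-module which is the direct sum of its
weight spaces `V_m`.  Then each weight space `V_r` is irreducible under the operators
`T(u,s) = μ(t^{-s})∘ρ(D(u,s)) − ρ(D(u,0))`: it has no proper nonzero subspace invariant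
under all `T(u,s)`. -/
theorem weight_spaces_are_T_irreducible (d : ℕ) (hd : 2 ≤ d) (α : Fin d → ℂ)
    (V : Type*) [AddCommGroup V] [Module ℂ V]
    (μ : Ad d →ₐ[ℂ] Module.End ℂ V)
    (ρ : Derivation ℂ (Ad d) (Ad d) →ₗ⁅ℂ⁆ Module.End ℂ V)
    (hcompat : ∀ (D : Derivation ℂ (Ad d) (Ad d)) (a : Ad d),
      ρ D * μ a - μ a * ρ D = μ (D a))
    (hwt : DirectSum.IsInternal (fun m : Fin d → ℤ => wtSp ρ α m))
    (hirr : ∀ M : Submodule ℂ V,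
      (∀ (a : Ad d), ∀ v ∈ M, μ a v ∈ M) →
      (∀ (D : Derivation ℂ (Ad d) (Ad d)), ∀ v ∈ M, ρ D v ∈ M) →
      M = ⊥ ∨ M = ⊤) :
    ∀ (r : Fin d → ℤ) (N : Submodule ℂ V), N ≤ wtSp ρ α r → N ≠ ⊥ →
      (∀ (u : Fin d → ℂ) (s : Fin d → ℤ) (D D0 : Derivation ℂ (Ad d) (Ad d)),
        IsD u s D → IsD u 0 D0 →
        ∀ v ∈ N, (μ (tm (-s)) * ρ D - ρ D0) v ∈ N) →
      N = wtSp ρ α r := by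
  intro r N hNle hNne hT
  set F : (Fin d → ℤ) → Submodule ℂ V := fun s => Submodule.map (μ (tm s)) N with hF
  set W : Submodule ℂ V := ⨆ s, F s with hWdef
  have hμμ : ∀ (s p : Fin d → ℤ) (v : V), μ (tm s) (μ (tm p) v) = μ (tm (s + p)) v := by
    intro s p v
    rw [← tm_mul, map_mul]
    rfl
  have hμ0 : ∀ v : V, μ (tm 0) v = v := by
    intro v
    rw [tm_zero, map_one]
    rfl
  have hFW : ∀ s, F s ≤ W := fun s => le_iSup F s
  have hNW : N ≤ W := fun v hv => hFW 0 ⟨v, hv, hμ0 v⟩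
  have hmono : ∀ (p : Fin d → ℤ), ∀ v ∈ W, μ (tm p) v ∈ W := by
    intro p v hv
    refine Submodule.iSup_induction F (motive := fun x => μ (tm p) x ∈ W) hv ?_ ?_ ?_
    · rintro s x ⟨w, hw, rfl⟩
      rw [hμμ]
      exact hFW (p + s) ⟨w, hw, rfl⟩
    · show μ (tm p) 0 ∈ W
      rw [map_zero]; exact W.zero_mem
    · intro x y hx hy
      show μ (tm p) (x + y) ∈ W
      rw [map_add]; exact W.add_mem hx hy
  have hWμ : ∀ (a : Ad d), ∀ v ∈ W, μ a v ∈ W := by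
    intro a
    induction a using AddMonoidAlgebra.induction_linear with
    | zero =>
      intro v hv
      simp only [map_zero, LinearMap.zero_apply]
      exact W.zero_mem
    | add f g hf hg =>
      intro v hv
      simp only [map_add, LinearMap.add_apply]
      exact W.add_mem (hf v hv) (hg v hv)
    | single m c =>
      intro v hv
      rw [single_eq_smul_tm', map_smul, LinearMap.smul_apply]
      exact W.smul_mem c (hmono m v hv)
  have hρ_single : ∀ (u : Fin d → ℂ) (s : Fin d → ℤ) (D : Derivation ℂ (Ad d) (Ad d)),
      IsD u s D → ∀ v ∈ W, ρ D v ∈ W := by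
    intro u s D hD v hv
    refine Submodule.iSup_induction F (motive := fun x => ρ D x ∈ W) hv ?_ ?_ ?_
    · rintro p x ⟨w, hw, rfl⟩
      have hc := congrArg (fun (f : Module.End ℂ V) => f w) (hcompat D (tm p))
      simp only [LinearMap.sub_apply, Module.End.mul_apply] at hc
      have key : ρ D w ∈ F s := by
        have hTw := hT u s D (Dd u 0) hD (isD_Dd u 0) w hw
        simp only [LinearMap.sub_apply, Module.End.mul_apply] at hTw
        have hD0 : ρ (Dd u 0) w = (∑ i, u i * ((r i : ℂ) + α i)) • w :=
          mem_wtSp.1 (hNle hw) u (Dd u 0) (isD_Dd u 0)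
        refine ⟨μ (tm (-s)) (ρ D w) - ρ (Dd u 0) w + (∑ i, u i * ((r i : ℂ) + α i)) • w,
          N.add_mem hTw (N.smul_mem _ hw), ?_⟩
        rw [← hD0, sub_add_cancel, hμμ, add_neg_cancel, hμ0]
      have heq : ρ D (μ (tm p) w) = μ (D (tm p)) w + μ (tm p) (ρ D w) :=
        eq_add_of_sub_eq hc
      rw [heq]
      apply W.add_mem
      · rw [hD p, map_smul, LinearMap.smul_apply]
        exact W.smul_mem _ (hFW (s + p) ⟨w, hw, hμμ s p w ▸ rfl⟩)
      · exact hmono p _ (hFW s key)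
    · show ρ D 0 ∈ W
      rw [map_zero]; exact W.zero_mem
    · intro x y hx hy
      show ρ D (x + y) ∈ W
      rw [map_add]; exact W.add_mem hx hy
  have hmapsum : ∀ {ι : Type} (t : Finset ι) (f : ι → Derivation ℂ (Ad d) (Ad d)),
      ρ (∑ i ∈ t, f i) = ∑ i ∈ t, ρ (f i) := by
    intro ι t f
    induction t using Finset.cons_induction with
    | empty => simp
    | cons i t hi ih => rw [Finset.sum_cons, map_add, ih, Finset.sum_cons]
  have hWρ : ∀ (D : Derivation ℂ (Ad d) (Ad d)), ∀ v ∈ W, ρ D v ∈ W := by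
    intro D v hv
    rw [D_eq_sum D, hmapsum, LinearMap.sum_apply]
    apply Submodule.sum_mem
    intro i _
    rw [hmapsum, LinearMap.sum_apply]
    apply Submodule.sum_mem
    intro s _
    rw [map_smul, LinearMap.smul_apply]
    exact W.smul_mem _ (hρ_single _ _ _ (isD_Dd _ _) v hv)
  have hW : W = ⊤ := by
    rcases hirr W hWμ hWρ with h | h
    · exact absurd (le_bot_iff.1 (h ▸ hNW)) hNne
    · exact h
  have hFwt : ∀ s, F s ≤ wtSp ρ α (r + s) := by
    rintro s v ⟨w, hw, rfl⟩
    rw [mem_wtSp]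
    intro u D0 hD0
    have hc := congrArg (fun (f : Module.End ℂ V) => f w) (hcompat D0 (tm s))
    simp only [LinearMap.sub_apply, Module.End.mul_apply] at hc
    have hw' : ρ D0 w = (∑ i, u i * ((r i : ℂ) + α i)) • w :=
      mem_wtSp.1 (hNle hw) u D0 hD0
    have hDs : D0 (tm s) = (∑ i, u i * (s i : ℂ)) • tm s := by
      have := hD0 s
      rwa [zero_add] at this
    have heq : ρ D0 (μ (tm s) w) = μ (D0 (tm s)) w + μ (tm s) (ρ D0 w) :=
      eq_add_of_sub_eq hc
    rw [heq, hDs, map_smul, LinearMap.smul_apply, hw', map_smul, ← add_smul]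
    congr 1
    rw [← Finset.sum_add_distrib]
    refine Finset.sum_congr rfl fun i _ => ?_
    simp only [Pi.add_apply]
    push_cast
    ring
  have hF0 : F 0 = N := by
    apply le_antisymm
    · rintro v ⟨w, hw, rfl⟩
      rw [hμ0]
      exact hw
    · intro v hv
      exact ⟨v, hv, hμ0 v⟩
  have hWle : W ≤ N ⊔ ⨆ m, ⨆ (_ : m ≠ r), wtSp ρ α m := by
    apply iSup_le
    intro s
    by_cases hs : s = 0
    · subst hs
      rw [hF0]
      exact le_sup_left
    · refine le_trans (hFwt s) (le_trans ?_ le_sup_right)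
      refine le_iSup₂ (f := fun m (_ : m ≠ r) => wtSp ρ α m) (r + s) ?_
      intro h
      apply hs
      have h2 : r + s = r + 0 := by rw [add_zero]; exact h
      exact add_left_cancel h2
  have hdisj : Disjoint (wtSp ρ α r) (⨆ m, ⨆ (_ : m ≠ r), wtSp ρ α m) :=
    iSupIndep_def.1 hwt.submodule_iSupIndep r
  refine le_antisymm hNle ?_
  calc wtSp ρ α r = wtSp ρ α r ⊓ W := by rw [hW, inf_top_eq]
    _ ≤ wtSp ρ α r ⊓ (N ⊔ ⨆ m, ⨆ (_ : m ≠ r), wtSp ρ α m) := inf_le_inf_left _ hWle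
    _ = (N ⊔ ⨆ m, ⨆ (_ : m ≠ r), wtSp ρ α m) ⊓ wtSp ρ α r := inf_comm _ _
    _ = N ⊔ ((⨆ m, ⨆ (_ : m ≠ r), wtSp ρ α m) ⊓ wtSp ρ α r) := sup_inf_assoc_of_le _ hNle
    _ ≤ N ⊔ ⊥ := sup_le_sup_left (by rw [inf_comm]; exact disjoint_iff.1 hdisj ▸ le_rfl) N
    _ = N := sup_bot_eq N
end

section
/- For all integers k, ℓ ≥ 1, one has [I_k, I_ℓ] ⊆ I_{k+ℓ−1}, i.e. [x, y] ∈ I_{k+ℓ−1} for all x ∈ I_ℓ and y ∈ I_k. -/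
/-- `T_k(u,r,m₁,…,m_k) = ∑_{S ⊆ {1,…,k}} (−1)^{|S|} T(u, r + ∑_{i∈S} mᵢ)`. -/
noncomputable def Tk {d : ℕ} {L : Type*} [AddCommGroup L] [Module ℂ L]
    (T : (Fin d → ℂ) → (Fin d → ℤ) → L) (k : ℕ)
    (u : Fin d → ℂ) (r : Fin d → ℤ) (m : Fin k → Fin d → ℤ) : L :=
  ∑ S : Finset (Fin k), ((-1 : ℂ) ^ S.card) • T u (r + ∑ i ∈ S, m i)

/-- `I_k`, the `ℂ`-linear span of all `T_k(u,r,m₁,…,m_k)` with `u ∈ ℂ^d` and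
`r, m₁,…,m_k ∈ ℤ^d`. -/
noncomputable def Ik {d : ℕ} {L : Type*} [AddCommGroup L] [Module ℂ L]
    (T : (Fin d → ℂ) → (Fin d → ℤ) → L) (k : ℕ) : Submodule ℂ L :=
  Submodule.span ℂ
    {x : L | ∃ (u : Fin d → ℂ) (r : Fin d → ℤ) (m : Fin k → Fin d → ℤ),
      x = Tk T k u r m}

/-! `T_k(u,r,m)` is the iterated difference `Δ_{m₁} ⋯ Δ_{m_k}` of `x ↦ T(u,x)` at `r`, where
`Δ_a F x = F x - F (x + a)`, so the bracket of two generators is the double difference, in `y` and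
in `x`, of `[T(v,y), T(u,x)]`. Of the four terms of that bracket, two depend on only one of the
variables and are killed by the difference in the other one. The other two have the shape
`φ(x) T(u, x + y)` with `φ` additive, and the Leibniz rule
`Δ_m (φ F) r = φ(r) Δ_m F r - ∑_j φ(m_j) Δ_{m ∖ m_j} F (r + m_j)` writes their double differences
as differences of `T(u, ·)` of order `k + l` and `k + l - 1`, both in `I_{k+l-1}` as
`I_{k+1} ⊆ I_k`. -/

open Finset

section IteratedDifference

variable {G M : Type*} [AddCommMonoid G] [AddCommGroup M] {k l : ℕ}

def boolSign (f : Fin k → Bool) : ℤ := ∏ i, if f i then -1 else 1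

def selectSum (m : Fin k → G) (f : Fin k → Bool) : G := ∑ i, if f i then m i else 0

-- Subsets of `Fin k` are encoded by indicator vectors, which split along `Fin.insertNth` and
-- `Fin.append`.
def iterDiff (F : G → M) (r : G) (m : Fin k → G) : M :=
  ∑ f : Fin k → Bool, boolSign f • F (r + selectSum m f)

theorem sum_boolVec_insertNth {N : Type*} [AddCommMonoid N] (j : Fin (k + 1))
    (Φ : (Fin (k + 1) → Bool) → N) :
    ∑ f, Φ f = ∑ f : Fin k → Bool, (Φ (j.insertNth true f) + Φ (j.insertNth false f)) := by
  rw [← (Fin.insertNthEquiv (fun _ => Bool) j).sum_comp, Fintype.sum_prod_type,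
    Fintype.sum_bool, ← sum_add_distrib]
  rfl

theorem boolSign_insertNth (j : Fin (k + 1)) (b : Bool) (f : Fin k → Bool) :
    boolSign (j.insertNth b f) = (if b then -1 else 1) * boolSign f := by
  simp [boolSign, Fin.prod_univ_succAbove _ j]

theorem selectSum_insertNth (j : Fin (k + 1)) (m : Fin (k + 1) → G) (b : Bool)
    (f : Fin k → Bool) :
    selectSum m (j.insertNth b f) = (if b then m j else 0) + selectSum (j.removeNth m) f := by
  simp [selectSum, Fin.sum_univ_succAbove _ j, Fin.removeNth]

theorem boolSign_append (f : Fin k → Bool) (g : Fin l → Bool) :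
    boolSign (Fin.append f g) = boolSign f * boolSign g := by
  simp [boolSign, Fin.prod_univ_add]

theorem selectSum_append (m : Fin k → G) (n : Fin l → G) (f : Fin k → Bool)
    (g : Fin l → Bool) :
    selectSum (Fin.append m n) (Fin.append f g) = selectSum m f + selectSum n g := by
  simp [selectSum, Fin.sum_univ_add]

theorem iterDiff_insertNth (F : G → M) (r a : G) (j : Fin (k + 1)) (m : Fin k → G) :
    iterDiff F r (j.insertNth a m) = iterDiff F r m - iterDiff F (r + a) m := by
  rw [iterDiff, sum_boolVec_insertNth j, iterDiff, iterDiff, ← sum_sub_distrib]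
  refine sum_congr rfl fun f _ => ?_
  simp only [boolSign_insertNth, selectSum_insertNth, Fin.insertNth_apply_same,
    Fin.removeNth_insertNth, if_true, Bool.false_eq_true, if_false, zero_add, neg_one_mul,
    one_mul, neg_smul, add_assoc]
  abel

theorem iterDiff_const (c : M) (r : G) (m : Fin (k + 1) → G) :
    iterDiff (fun _ => c) r m = 0 := by
  rw [← Fin.insertNth_self_removeNth 0 m, iterDiff_insertNth]
  exact sub_self _

theorem iterDiff_add (F F' : G → M) (r : G) (m : Fin k → G) :
    iterDiff (fun x => F x + F' x) r m = iterDiff F r m + iterDiff F' r m := by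
  simp only [iterDiff, smul_add, sum_add_distrib]

theorem iterDiff_sub (F F' : G → M) (r : G) (m : Fin k → G) :
    iterDiff (fun x => F x - F' x) r m = iterDiff F r m - iterDiff F' r m := by
  simp only [iterDiff, smul_sub, sum_sub_distrib]

theorem iterDiff_smul {R : Type*} [Ring R] [Module R M] (c : R) (F : G → M) (r : G)
    (m : Fin k → G) :
    iterDiff (fun x => c • F x) r m = c • iterDiff F r m := by
  simp only [iterDiff, smul_sum, smul_comm c]

theorem iterDiff_sum {ι : Type*} (s : Finset ι) (F : ι → G → M) (r : G) (m : Fin k → G) :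
    iterDiff (fun x => ∑ i ∈ s, F i x) r m = ∑ i ∈ s, iterDiff (F i) r m := by
  simp only [iterDiff, smul_sum]
  exact sum_comm

theorem iterDiff_comm (H : G → G → M) (r s : G) (m : Fin k → G) (n : Fin l → G) :
    iterDiff (fun y => iterDiff (fun x => H x y) r m) s n
      = iterDiff (fun x => iterDiff (fun y => H x y) s n) r m := by
  simp only [iterDiff, smul_sum]
  rw [sum_comm]
  exact sum_congr rfl fun _ _ => sum_congr rfl fun _ _ => smul_comm _ _ _

theorem iterDiff_append (F : G → M) (r s : G) (m : Fin k → G) (n : Fin l → G) :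
    iterDiff F (r + s) (Fin.append m n)
      = iterDiff (fun y => iterDiff (fun x => F (x + y)) r m) s n := by
  rw [iterDiff, ← (Fin.appendEquiv k l).sum_comp, Fintype.sum_prod_type, sum_comm]
  simp only [iterDiff, smul_sum]
  refine sum_congr rfl fun g _ => sum_congr rfl fun f _ => ?_
  rw [show Fin.appendEquiv k l (f, g) = Fin.append f g from rfl, boolSign_append,
    selectSum_append, mul_comm, mul_smul, add_add_add_comm]

theorem iterDiff_addMonoidHom_smul {R : Type*} [Ring R] [Module R M] (φ : G →+ R) (F : G → M)
    (r : G) (m : Fin (k + 1) → G) :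
    iterDiff (fun x => φ x • F x) r m
      = φ r • iterDiff F r m - ∑ j, φ (m j) • iterDiff F (r + m j) (j.removeNth m) := by
  have hφ : ∀ f, φ (r + selectSum m f) = φ r + ∑ j, if f j then φ (m j) else 0 := fun f => by
    simp [selectSum, map_sum, apply_ite φ]
  have hj : ∀ j, ∑ f, boolSign f • ((if f j then φ (m j) else 0) • F (r + selectSum m f))
      = -(φ (m j) • iterDiff F (r + m j) (j.removeNth m)) := fun j => by
    simp [sum_boolVec_insertNth j, boolSign_insertNth, selectSum_insertNth, iterDiff, smul_sum,
      add_assoc, smul_comm (φ (m j))]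
  calc iterDiff (fun x => φ x • F x) r m
      = ∑ f, boolSign f • (φ r • F (r + selectSum m f))
        + ∑ j, ∑ f, boolSign f • ((if f j then φ (m j) else 0) • F (r + selectSum m f)) := by
        simp only [iterDiff, hφ, add_smul, smul_add, sum_add_distrib, sum_smul, smul_sum]
        rw [sum_comm (s := univ)]
    _ = _ := by
      simp only [hj, sum_neg_distrib, ← sub_eq_add_neg, iterDiff, smul_sum, smul_comm (φ r)]

theorem lie_iterDiff_iterDiff {L : Type*} [LieRing L] (F F' : G → L) (r s : G)
    (m : Fin k → G) (n : Fin l → G) :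
    ⁅iterDiff F s n, iterDiff F' r m⁆
      = iterDiff (fun y => iterDiff (fun x => ⁅F y, F' x⁆) r m) s n := by
  simp only [iterDiff, sum_lie, lie_sum, zsmul_lie, lie_zsmul, smul_sum]
  rw [sum_comm]
  exact sum_congr rfl fun _ _ => sum_congr rfl fun _ _ => smul_comm _ _ _

end IteratedDifference

def pairing {d : ℕ} (v : Fin d → ℂ) : (Fin d → ℤ) →+ ℂ where
  toFun x := ∑ i, v i * x i
  map_zero' := by simp
  map_add' x y := by simp [mul_add, sum_add_distrib]

section Ik

variable {d : ℕ} {L : Type*} [AddCommGroup L] [Module ℂ L] (T : (Fin d → ℂ) → (Fin d → ℤ) → L)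

theorem Tk_eq_iterDiff {k : ℕ} (u : Fin d → ℂ) (r : Fin d → ℤ) (m : Fin k → Fin d → ℤ) :
    Tk T k u r m = iterDiff (T u) r m := by
  let e : Finset (Fin k) ≃ (Fin k → Bool) :=
    { toFun S i := decide (i ∈ S)
      invFun f := univ.filter (f · = true)
      left_inv S := by ext; simp
      right_inv f := by funext; simp }
  refine Fintype.sum_equiv e _ _ fun S => ?_
  simp only [e, Equiv.coe_fn_mk, boolSign, selectSum, decide_eq_true_eq, prod_ite_mem,
    sum_ite_mem, univ_inter, prod_const, ← Int.cast_smul_eq_zsmul ℂ]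
  push_cast
  rfl

theorem iterDiff_mem_Ik {k : ℕ} (u : Fin d → ℂ) (r : Fin d → ℤ) (m : Fin k → Fin d → ℤ) :
    iterDiff (T u) r m ∈ Ik T k :=
  Submodule.subset_span ⟨u, r, m, (Tk_eq_iterDiff T u r m).symm⟩

theorem Ik_succ_le (k : ℕ) : Ik T (k + 1) ≤ Ik T k := by
  rw [Ik, Submodule.span_le]
  rintro _ ⟨u, r, m, rfl⟩
  rw [Tk_eq_iterDiff, ← Fin.insertNth_self_removeNth 0 m, iterDiff_insertNth]
  exact sub_mem (iterDiff_mem_Ik T u r _) (iterDiff_mem_Ik T u _ _)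

theorem iterDiff_iterDiff_mem_Ik {k l : ℕ} (u : Fin d → ℂ) (r s : Fin d → ℤ)
    (m : Fin k → Fin d → ℤ) (n : Fin l → Fin d → ℤ) :
    iterDiff (fun y => iterDiff (fun x => T u (x + y)) r m) s n ∈ Ik T (k + l) := by
  rw [← iterDiff_append]
  exact iterDiff_mem_Ik T u _ _

theorem iterDiff_iterDiff_smul_mem_Ik {k l : ℕ} (φ : (Fin d → ℤ) →+ ℂ) (u : Fin d → ℂ)
    (r s : Fin d → ℤ) (m : Fin (k + 1) → Fin d → ℤ) (n : Fin l → Fin d → ℤ) :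
    iterDiff (fun y => iterDiff (fun x => φ x • T u (x + y)) r m) s n ∈ Ik T (k + l) := by
  simp only [iterDiff_addMonoidHom_smul φ, iterDiff_sub, iterDiff_smul, iterDiff_sum]
  refine sub_mem (Submodule.smul_mem _ _ ?_)
    (Submodule.sum_mem _ fun j _ => Submodule.smul_mem _ _ (iterDiff_iterDiff_mem_Ik T u _ _ _ _))
  exact Ik_succ_le T _ (add_right_comm k 1 l ▸ iterDiff_iterDiff_mem_Ik T u r s m n)

end Ik

section Bracket

variable {d : ℕ} {L : Type*} [LieRing L] [LieAlgebra ℂ L] (T : (Fin d → ℂ) → (Fin d → ℤ) → L)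

theorem lie_T_eq_pairing (hlin : ∀ r : Fin d → ℤ, IsLinearMap ℂ (fun u => T u r))
    (hbr : ∀ (u v : Fin d → ℂ) (r s : Fin d → ℤ),
      ⁅T v s, T u r⁆
        = (∑ i, u i * (s i : ℂ)) • T v s - (∑ i, v i * (r i : ℂ)) • T u r
          + T ((∑ i, v i * (r i : ℂ)) • u - (∑ i, u i * (s i : ℂ)) • v) (r + s))
    (u v : Fin d → ℂ) (x y : Fin d → ℤ) :
    ⁅T v y, T u x⁆ = pairing u y • T v y - pairing v x • T u x
      + (pairing v x • T u (x + y) - pairing u y • T v (y + x)) := by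
  rw [hbr, (hlin _).map_sub, (hlin _).map_smul, (hlin _).map_smul, add_comm x y]
  rfl

theorem lie_Tk_mem_Ik
    (hT : ∀ (u v : Fin d → ℂ) (x y : Fin d → ℤ),
      ⁅T v y, T u x⁆ = pairing u y • T v y - pairing v x • T u x
        + (pairing v x • T u (x + y) - pairing u y • T v (y + x)))
    {k l : ℕ} (u v : Fin d → ℂ) (r s : Fin d → ℤ)
    (m : Fin (k + 1) → Fin d → ℤ) (n : Fin (l + 1) → Fin d → ℤ) :
    ⁅Tk T (l + 1) v s n, Tk T (k + 1) u r m⁆ ∈ Ik T (k + l + 1) := by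
  simp only [Tk_eq_iterDiff, lie_iterDiff_iterDiff, hT, iterDiff_add,
    iterDiff_sub, iterDiff_const, sub_self, zero_add]
  refine sub_mem (iterDiff_iterDiff_smul_mem_Ik T (pairing v) u r s m n) ?_
  rw [iterDiff_comm, show k + l + 1 = l + (k + 1) by omega]
  exact iterDiff_iterDiff_smul_mem_Ik T (pairing u) v s r n m

end Bracket

theorem Ik_bracket_Il_general (d : ℕ)
    (L : Type*) [LieRing L] [LieAlgebra ℂ L]
    (T : (Fin d → ℂ) → (Fin d → ℤ) → L)
    (hlin : ∀ r : Fin d → ℤ, IsLinearMap ℂ (fun u => T u r))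
    (hbr : ∀ (u v : Fin d → ℂ) (r s : Fin d → ℤ),
      ⁅T v s, T u r⁆
        = (∑ i, u i * (s i : ℂ)) • T v s - (∑ i, v i * (r i : ℂ)) • T u r
          + T ((∑ i, v i * (r i : ℂ)) • u - (∑ i, u i * (s i : ℂ)) • v) (r + s))
    (k l : ℕ) (hk : 1 ≤ k) (hl : 1 ≤ l) :
    ∀ x ∈ Ik T l, ∀ y ∈ Ik T k, ⁅x, y⁆ ∈ Ik T (k + l - 1) := by
  obtain ⟨k, rfl⟩ := Nat.exists_eq_add_of_le' hk
  obtain ⟨l, rfl⟩ := Nat.exists_eq_add_of_le' hl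
  let bracket : L →ₗ[ℂ] L →ₗ[ℂ] L := LieModule.toEnd ℂ L L
  have hspan : Submodule.map₂ bracket (Ik T (l + 1)) (Ik T (k + 1)) ≤ Ik T (k + l + 1) := by
    rw [Ik, Ik, Submodule.map₂_span_span, Submodule.span_le]
    rintro _ ⟨_, ⟨v, s, n, rfl⟩, _, ⟨u, r, m, rfl⟩, rfl⟩
    exact lie_Tk_mem_Ik T (lie_T_eq_pairing T hlin hbr) u v r s m n
  intro x hx y hy
  rw [show k + 1 + (l + 1) - 1 = k + l + 1 by omega]
  exact hspan (Submodule.apply_mem_map₂ bracket hx hy)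

/-- For all `k, ℓ ≥ 1`, `[I_k, I_ℓ] ⊆ I_{k+ℓ−1}`. -/
theorem Ik_bracket_Il (d : ℕ) (hd : 2 ≤ d)
    (L : Type*) [LieRing L] [LieAlgebra ℂ L]
    (T : (Fin d → ℂ) → (Fin d → ℤ) → L)
    (hlin : ∀ r : Fin d → ℤ, IsLinearMap ℂ (fun u => T u r))
    (hzero : ∀ u : Fin d → ℂ, T u 0 = 0)
    (hind : LinearIndependent ℂ
      (fun p : Fin d × {r : Fin d → ℤ // r ≠ 0} => T (Pi.single p.1 1) p.2.1))
    (hspan : Submodule.span ℂ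
      (Set.range fun p : Fin d × {r : Fin d → ℤ // r ≠ 0} =>
        T (Pi.single p.1 1) p.2.1) = ⊤)
    (hbr : ∀ (u v : Fin d → ℂ) (r s : Fin d → ℤ),
      ⁅T v s, T u r⁆
        = (∑ i, u i * (s i : ℂ)) • T v s - (∑ i, v i * (r i : ℂ)) • T u r
          + T ((∑ i, v i * (r i : ℂ)) • u - (∑ i, u i * (s i : ℂ)) • v) (r + s))
    (k l : ℕ) (hk : 1 ≤ k) (hl : 1 ≤ l) :
    ∀ x ∈ Ik T l, ∀ y ∈ Ik T k, ⁅x, y⁆ ∈ Ik T (k + l - 1) :=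
  Ik_bracket_Il_general d L T hlin hbr k l hk hl
end
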